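/- arXiv:1807.10058 — 2 statements merged into one kernel-verified Lean document; each statement's English description precedes it below -/
import Mathlib

section
/- Let d ≥ 1 and let W be a finite subgroup of GL(d,ℤ). For all k, ℓ ∈ ℤ^d and all θ ∈ ℝ^d the recurrence relation ⟨k,θ⟩_s · ⟨ℓ,θ⟩_s = (1/|W|) · Σ_{w∈W} ⟨k + wᵀℓ, θ⟩_s = (1/|W|) · Σ_{w∈W} ⟨ℓ + wᵀk, θ⟩_s holds. -/
noncomputable section
open Complex Matrix

/-- The W-symmetrization (generalized cosine)
`⟨k,θ⟩ₛ = (1/|W|) · Σ_{w∈W} exp(2πi · kᵀ(wθ))` for a finite subgroup `W` of `GL(d,ℤ)`. -/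
def gencos {d : ℕ} (W : Subgroup (Matrix.GeneralLinearGroup (Fin d) ℤ)) [Fintype W]
    (k : Fin d → ℤ) (θ : Fin d → ℝ) : ℂ :=
  (1 / (Fintype.card W : ℂ)) * ∑ w : W, Complex.exp (2 * Real.pi * Complex.I *
    ∑ i, (k i : ℂ) *
      ∑ j, (((w : Matrix.GeneralLinearGroup (Fin d) ℤ) : Matrix (Fin d) (Fin d) ℤ) i j : ℂ) * (θ j : ℂ))

/-!
Expanding the product gives a double sum over `u, v ∈ W` of `exp (2πi (kᵀuθ + ℓᵀvθ))`.
Substituting `v = x u` and using `ℓᵀ(x u θ) = (xᵀℓ)ᵀ(u θ)` regroups it as a sum over `x ∈ W` of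
`|W| · ⟨k + xᵀℓ, θ⟩ₛ`. The second identity is the first one with `k` and `ℓ` exchanged.
-/

section

variable {n : Type*} [Fintype n]

def latticePhase (k : n → ℤ) (M : Matrix n n ℤ) (θ : n → ℝ) : ℂ :=
  (fun i => (k i : ℂ)) ⬝ᵥ (M.map (Int.cast : ℤ → ℂ) *ᵥ fun j => (θ j : ℂ))

theorem latticePhase_add_transpose_mulVec (k ℓ : n → ℤ) (M N : Matrix n n ℤ) (θ : n → ℝ) :
    latticePhase (k + Mᵀ *ᵥ ℓ) N θ = latticePhase k N θ + latticePhase ℓ (M * N) θ := by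
  have hcast : (fun i => (((k + Mᵀ *ᵥ ℓ) i : ℤ) : ℂ)) =
      (fun i => (k i : ℂ)) + (M.map (Int.cast : ℤ → ℂ))ᵀ *ᵥ fun i => (ℓ i : ℂ) := by
    funext i
    simp [Matrix.mulVec, dotProduct]
  have hmul : (M * N).map (Int.cast : ℤ → ℂ) = M.map Int.cast * N.map Int.cast :=
    Matrix.map_mul (f := Int.castRingHom ℂ)
  rw [latticePhase, latticePhase, latticePhase, hcast, add_dotProduct, mulVec_transpose,
    ← dotProduct_mulVec, mulVec_mulVec, hmul]

end

theorem Fintype.sum_mul_sum_eq_sum_sum_mul_mul {G R : Type*} [Group G] [Fintype G]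
    [CommSemiring R] (f g : G → R) :
    (∑ u, f u) * (∑ v, g v) = ∑ x, ∑ w, f w * g (x * w) := by
  rw [Finset.sum_comm, Finset.sum_mul_sum]
  refine Finset.sum_congr rfl fun w _ => ?_
  exact (Fintype.sum_equiv (Equiv.mulRight w) _ _ fun x => rfl).symm

theorem gencos_eq_sum_exp_latticePhase {d : ℕ} (W : Subgroup (GeneralLinearGroup (Fin d) ℤ))
    [Fintype W] (k : Fin d → ℤ) (θ : Fin d → ℝ) :
    gencos W k θ = (1 / (Fintype.card W : ℂ)) *
      ∑ w : W, exp (2 * Real.pi * I * latticePhase k (w : GeneralLinearGroup (Fin d) ℤ) θ) :=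
  rfl

theorem gencos_mul_gencos {d : ℕ} (W : Subgroup (GeneralLinearGroup (Fin d) ℤ)) [Fintype W]
    (k ℓ : Fin d → ℤ) (θ : Fin d → ℝ) :
    gencos W k θ * gencos W ℓ θ = (1 / (Fintype.card W : ℂ)) *
      ∑ x : W, gencos W (k + ((x : GeneralLinearGroup (Fin d) ℤ) : Matrix (Fin d) (Fin d) ℤ)ᵀ *ᵥ ℓ) θ := by
  simp only [gencos_eq_sum_exp_latticePhase, latticePhase_add_transpose_mulVec, mul_add, exp_add]
  rw [mul_mul_mul_comm, Fintype.sum_mul_sum_eq_sum_sum_mul_mul, Finset.mul_sum, Finset.mul_sum]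
  simp only [Subgroup.coe_mul, Units.val_mul, mul_assoc]

theorem gencos_recurrence_general {d : ℕ}
    (W : Subgroup (Matrix.GeneralLinearGroup (Fin d) ℤ)) [Fintype W]
    (k ℓ : Fin d → ℤ) (θ : Fin d → ℝ) :
    gencos W k θ * gencos W ℓ θ =
        (1 / (Fintype.card W : ℂ)) *
          ∑ w : W, gencos W (k + (((w : Matrix.GeneralLinearGroup (Fin d) ℤ) : Matrix (Fin d) (Fin d) ℤ))ᵀ.mulVec ℓ) θ ∧
      gencos W k θ * gencos W ℓ θ =
        (1 / (Fintype.card W : ℂ)) *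
          ∑ w : W, gencos W (ℓ + (((w : Matrix.GeneralLinearGroup (Fin d) ℤ) : Matrix (Fin d) (Fin d) ℤ))ᵀ.mulVec k) θ :=
  ⟨gencos_mul_gencos W k ℓ θ, mul_comm (gencos W k θ) _ ▸ gencos_mul_gencos W ℓ k θ⟩

/-- the recurrence relation
`⟨k,θ⟩ₛ · ⟨ℓ,θ⟩ₛ = (1/|W|) Σ_{w∈W} ⟨k + wᵀℓ, θ⟩ₛ = (1/|W|) Σ_{w∈W} ⟨ℓ + wᵀk, θ⟩ₛ`. -/
theorem gencos_recurrence {d : ℕ} (hd : 1 ≤ d)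
    (W : Subgroup (Matrix.GeneralLinearGroup (Fin d) ℤ)) [Fintype W]
    (k ℓ : Fin d → ℤ) (θ : Fin d → ℝ) :
    gencos W k θ * gencos W ℓ θ =
        (1 / (Fintype.card W : ℂ)) *
          ∑ w : W, gencos W (k + (((w : Matrix.GeneralLinearGroup (Fin d) ℤ) : Matrix (Fin d) (Fin d) ℤ))ᵀ.mulVec ℓ) θ ∧
      gencos W k θ * gencos W ℓ θ =
        (1 / (Fintype.card W : ℂ)) *
          ∑ w : W, gencos W (ℓ + (((w : Matrix.GeneralLinearGroup (Fin d) ℤ) : Matrix (Fin d) (Fin d) ℤ))ᵀ.mulVec k) θ :=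
  gencos_recurrence_general W k ℓ θ
end
end

section
/- The subgroup G of GL(3,ℤ) generated by s1, s2, s3 has exactly 24 elements and is isomorphic as a group to the symmetric group on 4 letters. -/
noncomputable section
open Complex

def s1 : Matrix (Fin 3) (Fin 3) ℤ := !![-1,0,0; 1,1,0; 0,0,1]
def s2 : Matrix (Fin 3) (Fin 3) ℤ := !![1,1,0; 0,-1,0; 0,1,1]
def s3 : Matrix (Fin 3) (Fin 3) ℤ := !![1,0,0; 0,1,1; 0,0,-1]

lemma s1s1 : s1 * s1 = 1 := by decide
lemma s2s2 : s2 * s2 = 1 := by decide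
lemma s3s3 : s3 * s3 = 1 := by decide

/-- `s1` (resp. `s2`, `s3`) as an element of GL(3,ℤ); it is its own inverse. -/
def g1 : Matrix.GeneralLinearGroup (Fin 3) ℤ := ⟨s1, s1, s1s1, s1s1⟩
def g2 : Matrix.GeneralLinearGroup (Fin 3) ℤ := ⟨s2, s2, s2s2, s2s2⟩
def g3 : Matrix.GeneralLinearGroup (Fin 3) ℤ := ⟨s3, s3, s3s3, s3s3⟩

/-- The subgroup of GL(3,ℤ) generated by `s1, s2, s3`. -/
def G : Subgroup (Matrix.GeneralLinearGroup (Fin 3) ℤ) := Subgroup.closure {g1, g2, g3}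

/-- `f k θ = (1/24) · Σ_{w∈G} exp(2πi · kᵀ(wθ))`, the symmetrized exponential sum
(generalized cosine) over `G`.  Since `G` is a finite set (24 elements), the
`finsum` over the carrier of `G` is the ordinary finite sum. -/
def f (k : Fin 3 → ℤ) (θ : Fin 3 → ℝ) : ℂ :=
  (1 / 24) * ∑ᶠ w ∈ (G : Set (Matrix.GeneralLinearGroup (Fin 3) ℤ)),
    Complex.exp (2 * Real.pi * Complex.I *
      ∑ i, (k i : ℂ) * ∑ j, ((w : Matrix (Fin 3) (Fin 3) ℤ) i j : ℂ) * (θ j : ℂ))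

/-!
`S₄` permutes the coordinates of `ℤ⁴` and fixes `(1,1,1,1)`, so it acts on the quotient
`ℤ⁴ / ℤ(1,1,1,1) ≅ ℤ³`, where the isomorphism reads off the differences `xᵢ - xᵢ₊₁`. In these
coordinates the adjacent transpositions `(0 1), (1 2), (2 3)` act by `s1, s2, s3`. The action is
faithful, and adjacent transpositions generate `S₄`, so `G` is a faithful image of `S₄`.
-/

/-- The action induced by `ρ` on the quotient by `ker B`, read in coordinates through `B`, with
`D` a section of `B`; the hypothesis `hρ` says that `ρ` preserves `ker B`. -/
def MonoidHom.compress {H R m n : Type*} [Monoid H] [Semiring R] [Fintype m] [Fintype n]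
    [DecidableEq m] [DecidableEq n] (ρ : H →* Matrix n n R) (B : Matrix m n R) (D : Matrix n m R)
    (hBD : B * D = 1) (hρ : ∀ h, B * ρ h * D * B = B * ρ h) : H →* Matrix m m R where
  toFun h := B * ρ h * D
  map_one' := by rw [map_one, Matrix.mul_one, hBD]
  map_mul' g h :=
    calc B * ρ (g * h) * D = B * ρ g * D * B * ρ h * D := by
          rw [hρ g]; simp only [map_mul, Matrix.mul_assoc]
      _ = _ := by simp only [Matrix.mul_assoc]

namespace S4

open Equiv

def diffMatrix : Matrix (Fin 3) (Fin 4) ℤ := !![1,-1,0,0; 0,1,-1,0; 0,0,1,-1]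

def tailSumMatrix : Matrix (Fin 4) (Fin 3) ℤ := !![1,1,1; 0,1,1; 0,0,1; 0,0,0]

lemma diffMatrix_mul_tailSumMatrix : diffMatrix * tailSumMatrix = 1 := by decide

lemma diffMatrix_mul_permMatrix_mul_tailSumMatrix_mul_diffMatrix (σ : Perm (Fin 4)) :
    diffMatrix * σ.permMatrix ℤ * tailSumMatrix * diffMatrix = diffMatrix * σ.permMatrix ℤ := by
  revert σ; decide

def standardRep : Perm (Fin 4) →* Matrix.GeneralLinearGroup (Fin 3) ℤ :=
  (Matrix.permMatrixHom.compress diffMatrix tailSumMatrix diffMatrix_mul_tailSumMatrix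
    fun σ ↦ diffMatrix_mul_permMatrix_mul_tailSumMatrix_mul_diffMatrix σ⁻¹).toHomUnits

lemma coe_standardRep (σ : Perm (Fin 4)) :
    (standardRep σ : Matrix (Fin 3) (Fin 3) ℤ) = diffMatrix * σ⁻¹.permMatrix ℤ * tailSumMatrix :=
  rfl

lemma standardRep_injective : Function.Injective standardRep := by
  rw [injective_iff_map_eq_one]
  intro σ h
  rw [Units.ext_iff, coe_standardRep] at h
  revert σ; decide

lemma standardRep_swap :
    standardRep (swap 0 1) = g1 ∧ standardRep (swap 1 2) = g2 ∧ standardRep (swap 2 3) = g3 := by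
  simp only [Units.ext_iff, coe_standardRep]
  decide

lemma closure_adjacent_swaps :
    Subgroup.closure {swap 0 1, swap 1 2, swap 2 3} = (⊤ : Subgroup (Perm (Fin 4))) := by
  rw [← Subgroup.closure_eq_top_of_mclosure_eq_top (Perm.mclosure_swap_castSucc_succ 3)]
  congr 1
  ext
  simp [Fin.exists_fin_succ, eq_comm]

lemma range_standardRep : standardRep.range = G := by
  rw [MonoidHom.range_eq_map, ← closure_adjacent_swaps, MonoidHom.map_closure, G]
  simp only [Set.image_insert_eq, Set.image_singleton, standardRep_swap]

end S4

/-- the subgroup `G` of GL(3,ℤ) generated by `s1, s2, s3` has exactly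
24 elements and is isomorphic to the symmetric group on 4 letters. -/
theorem G_card_and_iso_S4 :
    Nat.card G = 24 ∧ Nonempty (G ≃* Equiv.Perm (Fin 4)) := by
  let e : G ≃* Equiv.Perm (Fin 4) :=
    (MulEquiv.subgroupCongr S4.range_standardRep.symm).trans
      (MonoidHom.ofInjective S4.standardRep_injective).symm
  refine ⟨?_, ⟨e⟩⟩
  rw [Nat.card_congr e.toEquiv, Nat.card_perm, Nat.card_fin]
  rfl
end
end
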